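/- Let F : ℝ⁴ → ℝ be smooth and define the Cartan invariant of the third order ODE x''' = F(t, x, x', x'') by C = X_F²(∂₂²F) − X_F(∂₁∂₂F) + ∂₀∂₂F. Then at every point of ℝ⁴ one has C = −(3/2)·(V'(K₁) − V(K₀)). -/

import Mathlib

/-- Partial derivative in the `i`-th coordinate direction on `ℝⁿ = (Fin n → ℝ)`. -/
noncomputable def pd {n : ℕ} (i : Fin n) (f : (Fin n → ℝ) → ℝ) : (Fin n → ℝ) → ℝ :=
  fun x => fderiv ℝ f x (Pi.single i 1)

namespace Order3

/- Coordinates on `ℝ⁴` are `(t, x₀, x₁, x₂)`, i.e. `∂_t = pd 0`, `∂₀ = pd 1`,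
`∂₁ = pd 2`, `∂₂ = pd 3`, and `x₁ = p 2`, `x₂ = p 3`. -/

/-- Total derivative `X_F = ∂_t + x₁·∂₀ + x₂·∂₁ + F·∂₂` of the ODE `x''' = F(t,x,x',x'')`. -/
noncomputable def XF (F : (Fin 4 → ℝ) → ℝ) (u : (Fin 4 → ℝ) → ℝ) : (Fin 4 → ℝ) → ℝ :=
  fun p => pd 0 u p + p 2 * pd 1 u p + p 3 * pd 2 u p + F p * pd 3 u p

/-- The curvature `K₀`. -/
noncomputable def K0 (F : (Fin 4 → ℝ) → ℝ) : (Fin 4 → ℝ) → ℝ := fun p =>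
  pd 1 F p - XF F (pd 2 F) p + (1/3) * pd 2 F p * pd 3 F p
    + (2/3) * XF F (XF F (pd 3 F)) p - (2/3) * XF F (pd 3 F) p * pd 3 F p
    + (2/27) * (pd 3 F p)^3

/-- The curvature `K₁ = ∂₁F − X_F(∂₂F) + (1/3)(∂₂F)²`. -/
noncomputable def K1 (F : (Fin 4 → ℝ) → ℝ) : (Fin 4 → ℝ) → ℝ := fun p =>
  pd 2 F p - XF F (pd 3 F) p + (1/3) * (pd 3 F p)^2

/-- The operator `V = ∂₂`. -/
noncomputable def V (u : (Fin 4 → ℝ) → ℝ) : (Fin 4 → ℝ) → ℝ := pd 3 u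

/-- The operator `V' = −∂₁ − (2/3)∂₂F·∂₂`. -/
noncomputable def V' (F : (Fin 4 → ℝ) → ℝ) (u : (Fin 4 → ℝ) → ℝ) : (Fin 4 → ℝ) → ℝ :=
  fun p => -(pd 2 u p) - (2/3) * pd 3 F p * pd 3 u p

/-- The operator `V'' = ∂₀ + (1/3)∂₂F·∂₁ + (∂₁F + (4/9)(∂₂F)² − (2/3)X_F(∂₂F))·∂₂`. -/
noncomputable def V'' (F : (Fin 4 → ℝ) → ℝ) (u : (Fin 4 → ℝ) → ℝ) : (Fin 4 → ℝ) → ℝ :=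
  fun p => pd 1 u p + (1/3) * pd 3 F p * pd 2 u p
    + (pd 2 F p + (4/9) * (pd 3 F p)^2 - (2/3) * XF F (pd 3 F) p) * pd 3 u p

end Order3

section Aux

variable {n : ℕ}

@[fun_prop]
theorem contDiff_pd {f : (Fin n → ℝ) → ℝ} (hf : ContDiff ℝ (⊤ : ℕ∞) f) (i : Fin n) :
    ContDiff ℝ (⊤ : ℕ∞) (pd i f) :=
  (hf.fderiv_right (by simp)).clm_apply contDiff_const

@[fun_prop]
theorem differentiable_pd {f : (Fin n → ℝ) → ℝ} (hf : ContDiff ℝ (⊤ : ℕ∞) f) (i : Fin n) :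
    Differentiable ℝ (pd i f) :=
  (contDiff_pd hf i).differentiable (by simp)

theorem pd_add {u v : (Fin n → ℝ) → ℝ} (hu : Differentiable ℝ u) (hv : Differentiable ℝ v)
    (i : Fin n) (p : Fin n → ℝ) :
    pd i (fun x => u x + v x) p = pd i u p + pd i v p := by
  simp [pd, fderiv_fun_add (hu p) (hv p)]

theorem pd_sub {u v : (Fin n → ℝ) → ℝ} (hu : Differentiable ℝ u) (hv : Differentiable ℝ v)
    (i : Fin n) (p : Fin n → ℝ) :
    pd i (fun x => u x - v x) p = pd i u p - pd i v p := by
  simp [pd, fderiv_fun_sub (hu p) (hv p)]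

theorem pd_mul {u v : (Fin n → ℝ) → ℝ} (hu : Differentiable ℝ u) (hv : Differentiable ℝ v)
    (i : Fin n) (p : Fin n → ℝ) :
    pd i (fun x => u x * v x) p = pd i u p * v p + u p * pd i v p := by
  simp [pd, fderiv_fun_mul (hu p) (hv p)]; ring

theorem pd_const (c : ℝ) (i : Fin n) (p : Fin n → ℝ) :
    pd i (fun _ : Fin n → ℝ => c) p = 0 := by
  simp [pd]

theorem pd_sq {u : (Fin n → ℝ) → ℝ} (hu : Differentiable ℝ u) (i : Fin n) (p : Fin n → ℝ) :
    pd i (fun x => u x ^ 2) p = 2 * u p * pd i u p := by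
  have h : (fun x => u x ^ 2) = fun x => u x * u x := by funext x; ring
  rw [h, pd_mul hu hu]; ring

theorem pd_cube {u : (Fin n → ℝ) → ℝ} (hu : Differentiable ℝ u) (i : Fin n) (p : Fin n → ℝ) :
    pd i (fun x => u x ^ 3) p = 3 * u p ^ 2 * pd i u p := by
  have h : (fun x => u x ^ 3) = fun x => u x * u x * u x := by funext x; ring
  rw [h, pd_mul (u := fun x => u x * u x) (hu.mul hu) hu, pd_mul hu hu]; ring

theorem pd_coord (i j : Fin n) (p : Fin n → ℝ) :
    pd i (fun x : Fin n → ℝ => x j) p = (Pi.single (M := fun _ => ℝ) i 1 j) := by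
  have h : fderiv ℝ (fun x : Fin n → ℝ => x j) p
      = (ContinuousLinearMap.proj j : (Fin n → ℝ) →L[ℝ] ℝ) :=
    (ContinuousLinearMap.proj j : (Fin n → ℝ) →L[ℝ] ℝ).fderiv
  simp [pd, h]

theorem pd_comm {u : (Fin n → ℝ) → ℝ} (hu : ContDiff ℝ (⊤ : ℕ∞) u) (i j : Fin n) :
    pd i (pd j u) = pd j (pd i u) := by
  funext p
  have hd : DifferentiableAt ℝ (fderiv ℝ u) p :=
    ((hu.fderiv_right (m := (⊤ : ℕ∞)) (by simp)).differentiable (by simp)) p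
  have key : ∀ a b : Fin n,
      pd a (pd b u) p = fderiv ℝ (fderiv ℝ u) p (Pi.single a 1) (Pi.single b 1) := by
    intro a b
    have h1 : pd b u = fun x => (fderiv ℝ u x) (Pi.single b 1) := rfl
    rw [pd, h1, fderiv_clm_apply hd (differentiableAt_const _)]
    simp
  rw [key i j, key j i]
  exact (hu.contDiffAt.isSymmSndFDerivAt (by rw [minSmoothness_of_isRCLikeNormedField]; exact WithTop.coe_le_coe.mpr (le_top : (2 : ℕ∞) ≤ ⊤))) _ _

theorem pd_comm10 {u : (Fin 4 → ℝ) → ℝ} (hu : ContDiff ℝ (⊤ : ℕ∞) u) : pd 1 (pd 0 u) = pd 0 (pd 1 u) := pd_comm hu 1 0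
theorem pd_comm20 {u : (Fin 4 → ℝ) → ℝ} (hu : ContDiff ℝ (⊤ : ℕ∞) u) : pd 2 (pd 0 u) = pd 0 (pd 2 u) := pd_comm hu 2 0
theorem pd_comm30 {u : (Fin 4 → ℝ) → ℝ} (hu : ContDiff ℝ (⊤ : ℕ∞) u) : pd 3 (pd 0 u) = pd 0 (pd 3 u) := pd_comm hu 3 0
theorem pd_comm21 {u : (Fin 4 → ℝ) → ℝ} (hu : ContDiff ℝ (⊤ : ℕ∞) u) : pd 2 (pd 1 u) = pd 1 (pd 2 u) := pd_comm hu 2 1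
theorem pd_comm31 {u : (Fin 4 → ℝ) → ℝ} (hu : ContDiff ℝ (⊤ : ℕ∞) u) : pd 3 (pd 1 u) = pd 1 (pd 3 u) := pd_comm hu 3 1
theorem pd_comm32 {u : (Fin 4 → ℝ) → ℝ} (hu : ContDiff ℝ (⊤ : ℕ∞) u) : pd 3 (pd 2 u) = pd 2 (pd 3 u) := pd_comm hu 3 2

theorem XF_def (F u : (Fin 4 → ℝ) → ℝ) :
    Order3.XF F u = fun p => pd 0 u p + p 2 * pd 1 u p + p 3 * pd 2 u p + F p * pd 3 u p := rfl

theorem K0_def (F : (Fin 4 → ℝ) → ℝ) : Order3.K0 F = fun p =>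
    pd 1 F p - Order3.XF F (pd 2 F) p + (1/3) * pd 2 F p * pd 3 F p
    + (2/3) * Order3.XF F (Order3.XF F (pd 3 F)) p - (2/3) * Order3.XF F (pd 3 F) p * pd 3 F p
    + (2/27) * (pd 3 F p)^3 := rfl

theorem K1_def (F : (Fin 4 → ℝ) → ℝ) : Order3.K1 F = fun p =>
    pd 2 F p - Order3.XF F (pd 3 F) p + (1/3) * (pd 3 F p)^2 := rfl

end Aux

set_option maxHeartbeats 4000000 in
open Order3 in
/-- Theorem 7.1, identity for the Cartan invariant of third order ODEs:
`C = −(3/2)(V'(K₁) − V(K₀))`, where `C = X_F²(∂₂²F) − X_F(∂₁∂₂F) + ∂₀∂₂F`. -/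
theorem cartan_invariant_order3 (F : (Fin 4 → ℝ) → ℝ) (hF : ContDiff ℝ (⊤ : ℕ∞) F) :
    ∀ p : Fin 4 → ℝ,
      XF F (XF F (pd 3 (pd 3 F))) p - XF F (pd 2 (pd 3 F)) p + pd 1 (pd 3 F) p
        = -(3/2) * (V' F (K1 F) p - V (K0 F) p) := by
  intro p
  have hFd : Differentiable ℝ F := hF.differentiable (by simp)
  simp only [V, V', K0_def, K1_def, XF_def]
  simp (disch := fun_prop) only [pd_add, pd_sub, pd_mul, pd_const, pd_sq, pd_cube, pd_coord,
    pd_comm10, pd_comm20, pd_comm30, pd_comm21, pd_comm31, pd_comm32]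
  simp only [Pi.single_apply, Fin.isValue, show ((0:Fin 4) = 2) = False from by decide, show ((1:Fin 4) = 2) = False from by decide, show ((2:Fin 4) = 2) = True from by decide, show ((3:Fin 4) = 2) = False from by decide, show ((0:Fin 4) = 3) = False from by decide, show ((1:Fin 4) = 3) = False from by decide, show ((2:Fin 4) = 3) = False from by decide, show ((3:Fin 4) = 3) = True from by decide, if_true, if_false, mul_zero, zero_mul, mul_one, one_mul, add_zero, zero_add, sub_zero, neg_zero]
  ring
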